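/- arXiv:2003.14218 — 3 statements merged into one kernel-verified Lean document; each statement's English description precedes it below -/
import Mathlib

section
/- Let O be a finite order ideal in the terms of n variables, ∂O its border and P_O the Pommaret basis of the monomial ideal generated by the terms outside O. Let K be a field, A a commutative Noetherian K-algebra, B a ∂O-marked set in R_A = A[x_1,…,x_n], P = {b ∈ B : Ht(b) ∈ P_O} the P_O-marked set contained in B, and B' = B ∖ P. Then B is a ∂O-marked basis if and only if P is a P_O-marked basis and every polynomial of B' belongs to the ideal (P) generated by P. -/
open MvPolynomial

/-- A term in `n` variables, viewed as its exponent vector in `ℕ^n`. -/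
abbrev Term (n : ℕ) := Fin n →₀ ℕ

/-- The total degree of a term. -/
def termDeg {n : ℕ} (τ : Term n) : ℕ := τ.sum fun _ e => e

/-- `O` is an order ideal: every divisor (componentwise `≤`) of a term of `O` lies in `O`. -/
def IsOrderIdeal {n : ℕ} (O : Set (Term n)) : Prop :=
  ∀ σ τ : Term n, τ ∈ O → σ ≤ τ → σ ∈ O

/-- The border `∂O` of an order ideal `O`. -/
def border {n : ℕ} (O : Set (Term n)) : Set (Term n) :=
  {μ | μ ∉ O ∧ ∃ τ ∈ O, ∃ i : Fin n, μ = τ + Finsupp.single i 1}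

/-- The Pommaret basis `P_O = {σ ∉ O : σ / min σ ∈ O}` of the monomial ideal generated by the
terms outside `O`; here `i` is the minimal variable of `σ`. -/
def pommaret {n : ℕ} (O : Set (Term n)) : Set (Term n) :=
  {σ | σ ∉ O ∧ ∃ i : Fin n, σ i ≠ 0 ∧ (∀ j : Fin n, j < i → σ j = 0) ∧
    σ - Finsupp.single i 1 ∈ O}

/-- `F` is an `H`-marked set (with tails in `O`): for every `α ∈ H`,
`F α = α - Σ_{σ ∈ O} c_σ σ`, i.e. the coefficient of `α` is `1` and all other
terms in the support of `F α` lie in `O`. -/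
def IsMarkedSet {n : ℕ} (A : Type*) [CommRing A] (O H : Set (Term n))
    (F : Term n → MvPolynomial (Fin n) A) : Prop :=
  ∀ α ∈ H, (F α).coeff α = 1 ∧ ∀ γ ∈ (F α).support, γ ≠ α → γ ∈ O

/-- The `A`-submodule `⟨O⟩_A` of `R_A` spanned by the monomials with exponent in `O`. -/
noncomputable def OSpan {n : ℕ} (A : Type*) [CommRing A] (O : Set (Term n)) :
    Submodule A (MvPolynomial (Fin n) A) :=
  Submodule.span A ((fun σ : Term n => (monomial σ (1 : A) : MvPolynomial (Fin n) A)) '' O)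

/-- `R_A = (S) ⊕ ⟨O⟩_A` as an internal direct sum of `A`-modules. -/
def IsBasisDecomp {n : ℕ} (A : Type*) [CommRing A] (O : Set (Term n))
    (S : Set (MvPolynomial (Fin n) A)) : Prop :=
  (Submodule.restrictScalars A (Ideal.span S) ⊓ OSpan A O = ⊥) ∧
  (Submodule.restrictScalars A (Ideal.span S) ⊔ OSpan A O = ⊤)

/-- `F` is an `H`-marked basis. -/
def IsMarkedBasis {n : ℕ} (A : Type*) [CommRing A] (O H : Set (Term n))
    (F : Term n → MvPolynomial (Fin n) A) : Prop :=
  IsMarkedSet A O H F ∧ IsBasisDecomp A O (F '' H)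

/-- The iterated borders: `∂^0 O = O` and `∂^{k+1} O = ∂(∂^0 O ∪ ⋯ ∪ ∂^k O)`. -/
def borderIter {n : ℕ} (O : Set (Term n)) : ℕ → Set (Term n)
  | 0 => O
  | k + 1 => border (⋃ j : Fin (k + 1), borderIter O j.1)
decreasing_by exact j.2

/-- The index `ind_O(μ)`: the least `k` with `μ ∈ ∂^k O`. -/
noncomputable def indO {n : ℕ} (O : Set (Term n)) (μ : Term n) : ℕ :=
  sInf {k | μ ∈ borderIter O k}

/-- The multiplicative set of `β i` for the degree-ordered border reduction structure:
`M_{β_i} = {η : β_j ∤ η β_i for every j > i}`. -/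
def multSet {n m : ℕ} (β : Fin m → Term n) (i : Fin m) : Set (Term n) :=
  {η | ∀ j : Fin m, i < j → ¬ β j ≤ η + β i}

/-- The cone of `β i` by its multiplicative set. -/
def cone {n m : ℕ} (β : Fin m → Term n) (i : Fin m) : Set (Term n) :=
  {γ | ∃ η ∈ multSet β i, γ = η + β i}

/-- One step of border reduction: some `γ = η β_i ∈ supp g` with `η ∈ M_{β_i}` is replaced
using the marked polynomial `B i`. -/
def BStep {n m : ℕ} {A : Type*} [CommRing A] (β : Fin m → Term n)
    (B : Fin m → MvPolynomial (Fin n) A) (g h : MvPolynomial (Fin n) A) : Prop :=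
  ∃ (i : Fin m) (η : Term n), η ∈ multSet β i ∧ η + β i ∈ g.support ∧
    h = g - monomial η (g.coeff (η + β i)) * B i

/-- The S-polynomial of two marked polynomials with head terms `α`, `α'`. -/
noncomputable def Spoly {n : ℕ} {A : Type*} [CommRing A] (α α' : Term n)
    (f f' : MvPolynomial (Fin n) A) : MvPolynomial (Fin n) A :=
  monomial (α ⊔ α' - α) 1 * f - monomial (α ⊔ α' - α') 1 * f'

/-- `(α, α')` is a neighbour couple of distinct terms. -/
def Neighbour {n : ℕ} (α α' : Term n) : Prop :=
  α ≠ α' ∧ ((∃ j : Fin n, α = α' + Finsupp.single j 1) ∨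
    (∃ i j : Fin n, α + Finsupp.single i 1 = α' + Finsupp.single j 1))

/-- `(β i, β j)` is a non-multiplicative couple for the border reduction structure. -/
def NonMultB {n m : ℕ} (β : Fin m → Term n) (i j : Fin m) : Prop :=
  ∃ (ℓ : Fin n) (δ : Term n), Finsupp.single ℓ 1 ∉ multSet β i ∧ δ ∈ multSet β j ∧
    Finsupp.single ℓ 1 + β i = δ + β j

/-- The Pommaret multiplicative set of a term `α`: terms in the variables `x_1, …, min α`. -/
def pommMult {n : ℕ} (α : Term n) : Set (Term n) :=
  {η | ∀ j : Fin n, η j ≠ 0 → ∀ k : Fin n, k < j → α k = 0}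

/-- One step of Pommaret reduction. -/
def PStep {n : ℕ} {A : Type*} [CommRing A] (O : Set (Term n))
    (P : Term n → MvPolynomial (Fin n) A) (g h : MvPolynomial (Fin n) A) : Prop :=
  ∃ α ∈ pommaret O, ∃ η ∈ pommMult α, η + α ∈ g.support ∧
    h = g - monomial η (g.coeff (η + α)) * P α

/-- `(α, α')` is a non-multiplicative couple for the Pommaret reduction structure. -/
def NonMultP {n : ℕ} (α α' : Term n) : Prop :=
  ∃ ℓ : Fin n, Finsupp.single ℓ 1 ∉ pommMult α ∧
    ∃ δ ∈ pommMult α', Finsupp.single ℓ 1 + α = δ + α'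

/-!
Every term outside `O` lies in the Pommaret cone of an element of `P_O`, and rewriting a
multiple `η σ` (`σ ∈ O`) through that cone strictly lowers the multiplier `η` in colex order.
Hence reduction by any `P_O`-marked set `P` terminates and `(P) + ⟨O⟩_A = R_A`, whether or not
`P` is a basis. Since `(P) ⊆ (B)`, modularity of the submodule lattice then gives
`(B) ∩ ⟨O⟩_A = 0` iff `(P) ∩ ⟨O⟩_A = 0` and `(B) = (P)`, and the latter says `B' ⊆ (P)`.
-/

lemma pommaret_subset_border {n : ℕ} (O : Set (Term n)) : pommaret O ⊆ border O := by
  rintro σ ⟨hσ, i, hi, -, hsub⟩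
  refine ⟨hσ, σ - Finsupp.single i 1, hsub, i, ?_⟩
  rw [tsub_add_cancel_of_le (Finsupp.single_le_iff.2 (Nat.one_le_iff_ne_zero.2 hi))]

lemma add_single_mem_pommMult {n : ℕ} {η α : Term n} {i : Fin n} (hη : η ∈ pommMult α)
    (hi : ∀ k < i, α k = 0) : η + Finsupp.single i 1 ∈ pommMult α := by
  intro j hj k hkj
  by_cases hηj : η j = 0
  · obtain rfl : i = j := by
      by_contra hij
      simp [hηj, hij] at hj
    exact hi k hkj
  · exact hη j hηj k hkj

lemma exists_eq_add_pommaret {n : ℕ} {O : Set (Term n)} (h0 : (0 : Term n) ∈ O)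
    (μ : Term n) (hμ : μ ∉ O) :
    ∃ η α : Term n, α ∈ pommaret O ∧ η ∈ pommMult α ∧ μ = η + α := by
  induction μ using WellFoundedLT.induction with
  | _ μ ih =>
  obtain ⟨i, hμi, hbelow⟩ : ∃ i, μ i ≠ 0 ∧ ∀ k < i, μ k = 0 := by
    have hsupp : μ.support.Nonempty :=
      Finsupp.support_nonempty_iff.2 (by rintro rfl; exact hμ h0)
    refine ⟨μ.support.min' hsupp, Finsupp.mem_support_iff.1 (Finset.min'_mem _ _), fun k hk => ?_⟩
    by_contra h
    exact (Finset.min'_le _ k (Finsupp.mem_support_iff.2 h)).not_gt hk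
  obtain ⟨μ', rfl⟩ : ∃ μ', μ = μ' + Finsupp.single i 1 :=
    ⟨_, (tsub_add_cancel_of_le (Finsupp.single_le_iff.2 (Nat.one_le_iff_ne_zero.2 hμi))).symm⟩
  by_cases hμ'O : μ' ∈ O
  · refine ⟨0, _, ⟨hμ, i, hμi, hbelow, ?_⟩, fun j hj => absurd rfl hj, (zero_add _).symm⟩
    rwa [add_tsub_cancel_right]
  have hlt : μ' < μ' + Finsupp.single i 1 := lt_add_of_pos_right _ (by simp [pos_iff_ne_zero])
  obtain ⟨η, α, hα, hη, rfl⟩ := ih μ' hlt hμ'O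
  refine ⟨η + Finsupp.single i 1, α, hα, add_single_mem_pommMult hη fun k hk => ?_, ?_⟩
  · have := hbelow k hk
    simp only [Finsupp.add_apply] at this
    omega
  · rw [add_right_comm]

/-- At the last variable where `η` and `η'` differ, a larger `η'` would force `α ∣ σ`, i.e.
`α ∈ O`. -/
lemma toColex_lt_of_add_eq {n : ℕ} {O : Set (Term n)} (hO : IsOrderIdeal O)
    {η σ η' α : Term n} (hσ : σ ∈ O) (hα : α ∉ O) (hη' : η' ∈ pommMult α)
    (he : η + σ = η' + α) : toColex η' < toColex η := by
  refine lt_of_le_of_ne (not_lt.1 fun hlt => hα (hO α σ hσ fun u => ?_)) fun h => ?_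
  · obtain ⟨j, hj, hηj⟩ := Finsupp.Colex.lt_iff.1 hlt
    have hu := congrArg (· u) he
    have hj' := congrArg (· j) he
    simp only [Finsupp.add_apply] at hu hj'
    simp only [ofColex_toColex] at hj hηj
    rcases lt_trichotomy u j with huj | rfl | hju
    · rw [hη' j (by omega) u huj]
      exact Nat.zero_le _
    · omega
    · have := hj u hju
      omega
  · obtain rfl : η' = η := toColex_inj.1 h
    exact hα (add_left_cancel he ▸ hσ)

lemma oSpan_eq_restrictSupport {n : ℕ} (A : Type*) [CommRing A] (O : Set (Term n)) :
    OSpan A O = restrictSupport A O :=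
  (restrictSupport_eq_span A O).symm

lemma IsMarkedSet.monomial_sub_mem_oSpan {n : ℕ} {A : Type*} [CommRing A] {O H : Set (Term n)}
    {F : Term n → MvPolynomial (Fin n) A} (hF : IsMarkedSet A O H F) {α : Term n} (hα : α ∈ H) :
    monomial α 1 - F α ∈ OSpan A O := by
  rw [oSpan_eq_restrictSupport, mem_restrictSupport_iff]
  intro γ hγ
  have hγα : γ ≠ α := by
    rintro rfl
    simp [coeff_sub, (hF γ hα).1] at hγ
  refine (hF α hα).2 γ ?_ hγα
  rw [Finset.mem_coe, mem_support_iff] at hγ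
  rw [mem_support_iff]
  simpa [coeff_sub, coeff_monomial, Ne.symm hγα] using hγ

lemma span_pommaret_sup_oSpan_eq_top {n : ℕ} {A : Type*} [CommRing A] {O : Set (Term n)}
    (hO : IsOrderIdeal O) (h0 : (0 : Term n) ∈ O) {F : Term n → MvPolynomial (Fin n) A}
    (hF : IsMarkedSet A O (pommaret O) F) :
    (Ideal.span (F '' pommaret O)).restrictScalars A ⊔ OSpan A O = ⊤ := by
  set W := (Ideal.span (F '' pommaret O)).restrictScalars A ⊔ OSpan A O
  -- `x^η ⟨O⟩_A ⊆ W`, by well-founded induction on the multiplier `η` in colex order.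
  have hmul : ∀ η : Colex (Term n),
      OSpan A O ≤ W.comap (LinearMap.mulLeft A (monomial (ofColex η) 1)) := by
    intro η
    induction η using WellFoundedLT.induction with
    | _ η ih =>
    obtain ⟨η, rfl⟩ := toColex.surjective η
    refine Submodule.span_le.2 ?_
    rintro _ ⟨σ, hσ, rfl⟩
    change monomial η 1 * monomial σ 1 ∈ W
    rw [monomial_mul, one_mul]
    by_cases hin : η + σ ∈ O
    · exact Submodule.mem_sup_right (Submodule.subset_span ⟨_, hin, rfl⟩)
    obtain ⟨η', α, hα, hη', he⟩ := exists_eq_add_pommaret h0 _ hin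
    have hsplit : monomial (η + σ) (1 : A) =
        monomial η' 1 * F α + monomial η' 1 * (monomial α 1 - F α) := by
      rw [he, ← mul_add, add_sub_cancel, monomial_mul, one_mul]
    rw [hsplit]
    refine W.add_mem (Submodule.mem_sup_left ?_)
      (ih (toColex η') (toColex_lt_of_add_eq hO hσ hα.1 hη' he) (hF.monomial_sub_mem_oSpan hα))
    exact Ideal.mul_mem_left _ _ (Ideal.subset_span ⟨α, hα, rfl⟩)
  have hmon : ∀ μ : Term n, monomial μ (1 : A) ∈ W := fun μ => by
    simpa using hmul (toColex μ)
      (Submodule.subset_span ⟨0, h0, rfl⟩ : monomial 0 (1 : A) ∈ OSpan A O)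
  refine eq_top_iff.2 fun p _ => ?_
  have hp : p ∈ restrictSupport A (Set.univ : Set (Term n)) := by simp
  rw [restrictSupport_eq_span, Submodule.mem_span] at hp
  exact hp W (by rintro _ ⟨μ, -, rfl⟩; exact hmon μ)

/-- By modularity, `J = I ⊔ (J ⊓ V)`. -/
lemma inf_eq_bot_iff_of_le_of_sup_eq_top {α : Type*} [Lattice α] [BoundedOrder α]
    [IsModularLattice α] {I J V : α} (hIJ : I ≤ J) (hIV : I ⊔ V = ⊤) :
    J ⊓ V = ⊥ ↔ I ⊓ V = ⊥ ∧ J ≤ I := by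
  refine ⟨fun h => ⟨le_bot_iff.1 (h ▸ inf_le_inf_right V hIJ), ?_⟩, fun ⟨h, hJI⟩ => ?_⟩
  · calc J = (I ⊔ V) ⊓ J := by rw [hIV, top_inf_eq]
      _ = I ⊔ V ⊓ J := sup_inf_assoc_of_le V hIJ
      _ ≤ I := by rw [inf_comm, h, sup_bot_eq]
  · rwa [le_antisymm hJI hIJ]

lemma Ideal.span_image_le_span_image_iff {ι R : Type*} [CommSemiring R] {f : ι → R}
    {S T : Set ι} :
    Ideal.span (f '' T) ≤ Ideal.span (f '' S) ↔ ∀ x ∈ T \ S, f x ∈ Ideal.span (f '' S) := by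
  refine ⟨fun h x hx => h (Ideal.subset_span ⟨x, hx.1, rfl⟩), fun h => Ideal.span_le.2 ?_⟩
  rintro _ ⟨x, hx, rfl⟩
  by_cases hxS : x ∈ S
  · exact Ideal.subset_span ⟨x, hxS, rfl⟩
  · exact h x ⟨hx, hxS⟩

theorem border_marked_basis_iff_pommaret_general {n : ℕ} (A : Type*) [CommRing A]
    (O : Set (Term n)) (hO : IsOrderIdeal O)
    (B : Term n → MvPolynomial (Fin n) A)
    (hB : IsMarkedSet A O (border O) B) :
    IsMarkedBasis A O (border O) B ↔
      (IsMarkedBasis A O (pommaret O) B ∧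
        ∀ β ∈ border O \ pommaret O, B β ∈ Ideal.span (B '' pommaret O)) := by
  rcases O.eq_empty_or_nonempty with rfl | ⟨τ, hτ⟩
  · simp [IsMarkedBasis, border, pommaret]
  have hsub := pommaret_subset_border O
  have hP : IsMarkedSet A O (pommaret O) B := fun α hα => hB α (hsub hα)
  have htop := span_pommaret_sup_oSpan_eq_top hO (hO 0 τ hτ (zero_le : 0 ≤ τ)) hP
  have hle : (Ideal.span (B '' pommaret O)).restrictScalars A ≤
      (Ideal.span (B '' border O)).restrictScalars A := Ideal.span_mono (Set.image_mono hsub)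
  have htop' : (Ideal.span (B '' border O)).restrictScalars A ⊔ OSpan A O = ⊤ :=
    top_unique (htop ▸ sup_le_sup_right hle _)
  simp only [IsMarkedBasis, IsBasisDecomp, hB, hP, htop, htop', true_and, and_true,
    inf_eq_bot_iff_of_le_of_sup_eq_top hle htop, Submodule.restrictScalars_le,
    Ideal.span_image_le_span_image_iff]

/-- Theorem `prop:BorderAndPommB`: for a finite order ideal `O`, a
`∂O`-marked set `B` is a `∂O`-marked basis iff the `P_O`-marked set `P ⊆ B` (i.e. the
restriction of `B` to head terms in `P_O`) is a `P_O`-marked basis and every polynomial of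
`B' = B ∖ P` belongs to the ideal generated by `P`. -/
theorem border_marked_basis_iff_pommaret {n : ℕ} (K : Type*) [Field K] (A : Type*) [CommRing A] [Algebra K A]
    [IsNoetherianRing A]
    (O : Set (Term n)) (hO : IsOrderIdeal O) (hOfin : O.Finite)
    (B : Term n → MvPolynomial (Fin n) A)
    (hB : IsMarkedSet A O (border O) B) :
    IsMarkedBasis A O (border O) B ↔
      (IsMarkedBasis A O (pommaret O) B ∧
        ∀ β ∈ border O \ pommaret O, B β ∈ Ideal.span (B '' pommaret O)) :=
  border_marked_basis_iff_pommaret_general A O hO B hB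
end

section
/- Let O be a finite order ideal in the terms of n variables. If γ is a term not in O and β ∈ ∂O divides γ and has maximal degree among the elements of ∂O dividing γ, then ind_O(γ) = deg(γ/β) + 1. -/
open MvPolynomial

/-! Adding the border of a set is the same as adjoining its multiples by the variables, so
`∂^0 O ∪ ⋯ ∪ ∂^k O` consists of `O` and the terms `β·δ` with `β ∈ ∂O` and `deg δ < k`. A term
`γ ∉ O` therefore first appears at index `1 + min deg(γ/β)` over its border divisors `β`, and this
minimum is attained exactly at a border divisor of maximal degree. -/

variable {n : ℕ}

lemma termDeg_eq_degree (τ : Term n) : termDeg τ = τ.degree := rfl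

lemma termDeg_add (σ τ : Term n) : termDeg (σ + τ) = termDeg σ + termDeg τ := by
  simp only [termDeg_eq_degree, map_add]

lemma exists_eq_add_single_of_termDeg_eq_succ {δ : Term n} {m : ℕ} (h : termDeg δ = m + 1) :
    ∃ δ' : Term n, ∃ i : Fin n, termDeg δ' = m ∧ δ = δ' + Finsupp.single i 1 := by
  obtain ⟨i, hi⟩ : ∃ i, δ i ≠ 0 := by
    by_contra! h0
    rw [termDeg_eq_degree, (Finsupp.degree_eq_zero_iff δ).2 (Finsupp.ext h0)] at h
    omega
  have hle : Finsupp.single i 1 ≤ δ := Finsupp.single_le_iff.2 (Nat.one_le_iff_ne_zero.2 hi)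
  refine ⟨δ - Finsupp.single i 1, i, ?_, (tsub_add_cancel_of_le hle).symm⟩
  have := termDeg_add (δ - Finsupp.single i 1) (Finsupp.single i 1)
  rw [tsub_add_cancel_of_le hle, termDeg_eq_degree (Finsupp.single i 1),
    Finsupp.degree_single] at this
  omega

def mulVars (S : Set (Term n)) : Set (Term n) :=
  {μ | ∃ τ ∈ S, ∃ i : Fin n, μ = τ + Finsupp.single i 1}

lemma mulVars_union (S T : Set (Term n)) : mulVars (S ∪ T) = mulVars S ∪ mulVars T := by
  ext μ
  simp only [mulVars, Set.mem_union, Set.mem_ofPred_eq]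
  constructor
  · rintro ⟨τ, hτ | hτ, h⟩
    exacts [Or.inl ⟨τ, hτ, h⟩, Or.inr ⟨τ, hτ, h⟩]
  · rintro (⟨τ, hτ, h⟩ | ⟨τ, hτ, h⟩)
    exacts [⟨τ, Or.inl hτ, h⟩, ⟨τ, Or.inr hτ, h⟩]

lemma union_border_eq_union_mulVars (S : Set (Term n)) : S ∪ border S = S ∪ mulVars S := by
  ext μ
  simp only [border, mulVars, Set.mem_union, Set.mem_ofPred_eq]
  tauto

def borderUnion (O : Set (Term n)) (k : ℕ) : Set (Term n) :=
  {μ | ∃ j ≤ k, μ ∈ borderIter O j}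

lemma borderIter_succ (O : Set (Term n)) (k : ℕ) :
    borderIter O (k + 1) = border (borderUnion O k) := by
  rw [borderIter]
  congr 1
  ext μ
  simp only [Set.mem_iUnion, borderUnion, Set.mem_ofPred_eq]
  exact ⟨fun ⟨j, h⟩ => ⟨j, Nat.lt_succ_iff.1 j.2, h⟩,
    fun ⟨j, hj, h⟩ => ⟨⟨j, Nat.lt_succ_iff.2 hj⟩, h⟩⟩

lemma borderUnion_zero (O : Set (Term n)) : borderUnion O 0 = O := by
  ext μ
  simp [borderUnion, borderIter]

lemma borderUnion_succ (O : Set (Term n)) (k : ℕ) :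
    borderUnion O (k + 1) = borderUnion O k ∪ mulVars (borderUnion O k) := by
  rw [← union_border_eq_union_mulVars, ← borderIter_succ]
  ext μ
  simp only [borderUnion, Set.mem_union, Set.mem_ofPred_eq]
  constructor
  · rintro ⟨j, hj, h⟩
    rcases Nat.lt_or_eq_of_le hj with hj | rfl
    exacts [Or.inl ⟨j, Nat.lt_succ_iff.1 hj, h⟩, Or.inr h]
  · rintro (⟨j, hj, h⟩ | h)
    exacts [⟨j, hj.trans k.le_succ, h⟩, ⟨k + 1, le_rfl, h⟩]

def borderCone (O : Set (Term n)) (k : ℕ) : Set (Term n) :=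
  {γ | ∃ β ∈ border O, ∃ δ : Term n, termDeg δ < k ∧ γ = β + δ}

lemma borderCone_zero (O : Set (Term n)) : borderCone O 0 = ∅ := by
  simp [borderCone]

lemma borderCone_mono (O : Set (Term n)) : Monotone (borderCone O) :=
  fun _ _ hkl _ ⟨β, hβ, δ, hδ, h⟩ => ⟨β, hβ, δ, hδ.trans_le hkl, h⟩

lemma borderCone_succ (O : Set (Term n)) (k : ℕ) :
    borderCone O (k + 1) = border O ∪ mulVars (borderCone O k) := by
  ext γ
  simp only [borderCone, mulVars, Set.mem_union, Set.mem_ofPred_eq]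
  constructor
  · rintro ⟨β, hβ, δ, hδ, rfl⟩
    rcases Nat.eq_zero_or_eq_succ_pred (termDeg δ) with h0 | hsucc
    · rw [termDeg_eq_degree, Finsupp.degree_eq_zero_iff] at h0
      simpa [h0] using Or.inl hβ
    · obtain ⟨δ', i, hδ', rfl⟩ := exists_eq_add_single_of_termDeg_eq_succ hsucc
      exact Or.inr ⟨β + δ', ⟨β, hβ, δ', by omega, rfl⟩, i, (add_assoc _ _ _).symm⟩
  · rintro (hγ | ⟨_, ⟨β, hβ, δ, hδ, rfl⟩, i, rfl⟩)
    · exact ⟨γ, hγ, 0, by simp [termDeg], (add_zero γ).symm⟩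
    · refine ⟨β, hβ, δ + Finsupp.single i 1, ?_, add_assoc _ _ _⟩
      rw [termDeg_add, termDeg_eq_degree (Finsupp.single i 1), Finsupp.degree_single]
      omega

lemma borderUnion_eq (O : Set (Term n)) (k : ℕ) : borderUnion O k = O ∪ borderCone O k := by
  induction k with
  | zero => rw [borderUnion_zero, borderCone_zero, Set.union_empty]
  | succ k ih =>
    have hmono : borderCone O k ⊆ borderCone O (k + 1) := borderCone_mono O k.le_succ
    have hO := Set.ext_iff.1 (union_border_eq_union_mulVars O)
    rw [borderCone_succ] at hmono ⊢
    rw [borderUnion_succ, ih, mulVars_union]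
    ext μ
    have := @hmono μ
    specialize hO μ
    simp only [Set.mem_union] at this hO ⊢
    tauto

lemma indO_eq_succ {O : Set (Term n)} {μ : Term n} {k : ℕ} (h : μ ∈ borderUnion O (k + 1))
    (h' : μ ∉ borderUnion O k) : indO O μ = k + 1 := by
  obtain ⟨j, hj, hμ⟩ := h
  obtain rfl : j = k + 1 := by
    by_contra hne
    exact h' ⟨j, by omega, hμ⟩
  refine le_antisymm (Nat.sInf_le hμ) (le_csInf ⟨_, hμ⟩ fun i hi => ?_)
  by_contra! hlt
  exact h' ⟨i, by omega, hi⟩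

theorem indO_eq_of_maximal_border_divisor_general {n : ℕ}
    (O : Set (Term n))
    (γ β : Term n) (hγ : γ ∉ O) (hβ : β ∈ border O) (hdvd : β ≤ γ)
    (hmax : ∀ β' ∈ border O, β' ≤ γ → termDeg β' ≤ termDeg β) :
    indO O γ = termDeg (γ - β) + 1 := by
  have hcone (k : ℕ) : γ ∈ borderUnion O k ↔ γ ∈ borderCone O k := by
    simp only [borderUnion_eq, Set.mem_union, hγ, false_or]
  apply indO_eq_succ
  · exact (hcone _).2 ⟨β, hβ, γ - β, Nat.lt_succ_self _, (add_tsub_cancel_of_le hdvd).symm⟩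
  · intro hmem
    obtain ⟨β', hβ', δ, hδ, rfl⟩ := (hcone _).1 hmem
    have hdeg := termDeg_add β (β' + δ - β)
    rw [add_tsub_cancel_of_le hdvd, termDeg_add] at hdeg
    have := hmax β' hβ' le_self_add
    omega

/-- Lemma `lem:IndB` (1): if `γ ∉ O` and `β ∈ ∂O` is a divisor of `γ` of
maximal degree among the border divisors of `γ`, then `ind_O(γ) = deg(γ/β) + 1`. -/
theorem indO_eq_of_maximal_border_divisor {n : ℕ}
    (O : Set (Term n)) (hO : IsOrderIdeal O) (hOfin : O.Finite)
    (γ β : Term n) (hγ : γ ∉ O) (hβ : β ∈ border O) (hdvd : β ≤ γ)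
    (hmax : ∀ β' ∈ border O, β' ≤ γ → termDeg β' ≤ termDeg β) :
    indO O γ = termDeg (γ - β) + 1 :=
  indO_eq_of_maximal_border_divisor_general O γ β hγ hβ hdvd hmax
end

section
/- Let O be a finite order ideal in the terms of n variables, and fix an enumeration β_1,…,β_m of ∂O with nondecreasing degrees; for each i put M_{β_i} = {η a term : β_j does not divide η·β_i for every j > i} and Cone(β_i) = {η·β_i : η ∈ M_{β_i}}. Then the cones Cone(β_1),…,Cone(β_m) are pairwise disjoint, and every term lying in the monomial ideal generated by ∂O belongs to exactly one cone Cone(β_i). -/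
open MvPolynomial

/-!
A term `γ` lies in `Cone(β_i)` exactly when `β_i ∣ γ` and no later border term divides `γ`;
so `γ` lies in the cone of the largest index `i` with `β_i ∣ γ` and in no other.
-/

theorem mem_cone_iff {n m : ℕ} (β : Fin m → Term n) (i : Fin m) (γ : Term n) :
    γ ∈ cone β i ↔ β i ≤ γ ∧ ∀ j, i < j → ¬ β j ≤ γ := by
  constructor
  · rintro ⟨η, hη, rfl⟩
    exact ⟨le_add_self, hη⟩
  · rintro ⟨hle, hlater⟩
    refine ⟨γ - β i, ?_, (tsub_add_cancel_of_le hle).symm⟩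
    simpa only [multSet, Set.mem_ofPred_eq, tsub_add_cancel_of_le hle] using hlater

theorem eq_of_mem_cone_of_mem_cone {n m : ℕ} (β : Fin m → Term n) {i j : Fin m} {γ : Term n}
    (hi : γ ∈ cone β i) (hj : γ ∈ cone β j) : i = j := by
  rw [mem_cone_iff] at hi hj
  rcases lt_trichotomy i j with h | h | h
  · exact absurd hj.1 (hi.2 j h)
  · exact h
  · exact absurd hi.1 (hj.2 i h)

theorem pairwise_disjoint_cone {n m : ℕ} (β : Fin m → Term n) :
    Pairwise fun i j => Disjoint (cone β i) (cone β j) :=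
  fun _ _ hij => Set.disjoint_left.2 fun _ hi hj => hij (eq_of_mem_cone_of_mem_cone β hi hj)

theorem exists_mem_cone_of_le {n m : ℕ} (β : Fin m → Term n) {i₀ : Fin m} {γ : Term n}
    (h : β i₀ ≤ γ) : ∃ i, γ ∈ cone β i := by
  obtain ⟨i, hi, hmax⟩ := Finset.exists_max_image
    (Finset.univ.filter fun j => β j ≤ γ) id ⟨i₀, by simpa using h⟩
  refine ⟨i, (mem_cone_iff β i γ).2 ⟨by simpa using hi, fun j hij hj => ?_⟩⟩
  exact (hmax j (by simpa using hj)).not_gt hij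

theorem border_cones_partition_general {n : ℕ}
    (O : Set (Term n))
    {m : ℕ} (β : Fin m → Term n)
    (hβrange : Set.range β = border O) :
    (∀ i j : Fin m, i ≠ j → Disjoint (cone β i) (cone β j)) ∧
    (∀ γ : Term n, (∃ b ∈ border O, b ≤ γ) → ∃! i : Fin m, γ ∈ cone β i) := by
  refine ⟨fun _ _ hij => pairwise_disjoint_cone β hij, ?_⟩
  rintro γ ⟨b, hb, hbγ⟩
  obtain ⟨i₀, rfl⟩ := hβrange ▸ hb
  obtain ⟨i, hi⟩ := exists_mem_cone_of_le β hbγ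
  exact ⟨i, hi, fun j hj => eq_of_mem_cone_of_mem_cone β hj hi⟩

/-- for the degree-ordered border reduction structure, the cones of the
border terms are pairwise disjoint and cover the monomial ideal generated by `∂O`: every
term divisible by some border term lies in exactly one cone. -/
theorem border_cones_partition {n : ℕ}
    (O : Set (Term n)) (hO : IsOrderIdeal O) (hOfin : O.Finite)
    {m : ℕ} (β : Fin m → Term n) (hβinj : Function.Injective β)
    (hβrange : Set.range β = border O)
    (hβdeg : Monotone fun i => termDeg (β i)) :
    (∀ i j : Fin m, i ≠ j → Disjoint (cone β i) (cone β j)) ∧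
    (∀ γ : Term n, (∃ b ∈ border O, b ≤ γ) → ∃! i : Fin m, γ ∈ cone β i) :=
  border_cones_partition_general O β hβrange
end
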